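/- arXiv:2604.17984 — 4 statements merged into one kernel-verified Lean document; each statement's English description precedes it below -/
import Mathlib

section
/- With the same loss ℓ_t as above and assuming cα·ε ≤ (1−2α)(1−α)/2 (i.e., ε sufficiently small), for any π₁ with m_t(π₁)=0 and any π₂ with m_t(π₂)=1, we have ℓ_t(π₁) ≤ ℓ_t(π₂). -/
theorem miscoverage_first_ordering (S : Finset ℝ) (hS : ∀ π ∈ S, π ∈ Set.Icc (0:ℝ) 1)
    (m : ℝ → ℝ) (hm01 : ∀ π, m π = 0 ∨ m π = 1)
    (hmono : ∀ π₁ ∈ S, ∀ π₂ ∈ S, π₁ ≤ π₂ → m π₁ ≤ m π₂)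
    (α c ε : ℝ) (hα0 : 0 < α) (hα1 : α < 0.5) (hc : 0 < c) (hε : 0 < ε)
    (hsmall : c * α * ε ≤ (1 - 2*α) * (1 - α) / 2)
    (a : ℝ → ℝ)
    (ha : ∀ π, a π = if m π = 0 then -(c * α * (1 + π^2 / (1 - α)) * ε)
        else -(c * α * ε / (1 + α * (1 - 2*α) * π)))
    (ℓ : ℝ → ℝ)
    (hℓ : ∀ π, ℓ π = m π + (if m π = 0 then α + α * (1 - α) else -(α * (1 - α))) + a π)
    (π₁ π₂ : ℝ) (h₁ : π₁ ∈ S) (h₂ : π₂ ∈ S)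
    (hm₁ : m π₁ = 0) (hm₂ : m π₂ = 1) :
    ℓ π₁ ≤ ℓ π₂ := by
  obtain ⟨hp1l, hp1r⟩ := hS π₁ h₁
  obtain ⟨hp2l, hp2r⟩ := hS π₂ h₂
  have h10 : (1:ℝ) ≠ 0 := one_ne_zero
  rw [hℓ π₁, hℓ π₂, ha π₁, ha π₂, hm₁, hm₂]
  simp only [if_pos rfl, one_ne_zero, if_neg h10, if_true, if_false]
  have hα1' : α < 1/2 := by norm_num at hα1; linarith
  have h2α : (0:ℝ) ≤ 1 - 2*α := by linarith
  have hprod : 0 ≤ α * (1 - 2*α) * π₂ := by positivity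
  have hden : (0:ℝ) < 1 + α * (1 - 2*α) * π₂ := by linarith
  have h1α : (0:ℝ) < 1 - α := by linarith
  have hA : 0 ≤ c * α * (1 + π₁^2 / (1 - α)) * ε := by positivity
  have hcae : 0 < c * α * ε := by positivity
  have hB : c * α * ε / (1 + α * (1 - 2*α) * π₂) ≤ c * α * ε := by
    rw [div_le_iff₀ hden]
    nlinarith
  nlinarith
end

section
/- Regret-to-coverage conversion: Let T ∈ ℕ, α ∈ (0,0.5), and let ℓ_t(π) = m_t(π) + 1{m_t(π)=0} g(α) + 1{m_t(π)=1} h(α) + a_t(π) with g(α) = α + α(1−α), h(α) = −α(1−α), and arbitrary inefficiency terms a_t : Π → ℝ. Suppose 0 ∈ Π and the learner plays π_1,…,π_T with regret Reg(T) = Σ_t ℓ_t(π_t) − min_{π∈Π} Σ_t ℓ_t(π), and suppose m_t(0)=0 for all t. Then (1/T)Σ_t m_t(π_t) − α ≤ (1/T)Reg(T) + C₁ + (α/T)·Σ_{t: m_t(π_t)=1} Δ, where C₁ = (T·a_t(0) − Σ_t a_t(π_t))/T (with a_t(0) the inefficiency at π=0) and Δ = (1−α)/α − (Σ_t 1{m_t(π_t)=0})/(Σ_t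 1{m_t(π_t)=1}) whenever Σ_t 1{m_t(π_t)=1} > 0. -/
/-!
Against the comparator `π = 0`, which always covers, a round with `m = 0` costs the learner
nothing beyond the inefficiency difference, and a round with `m = 1` costs
`1 + h(α) - g(α) = (1 - α)(1 - 2α) ≥ 0` more. Hence `Reg(T) ≥ Σ_t a_t(π_t) - T a_t(0)`, i.e.
`Reg(T)/T + C₁ ≥ 0`. On the other hand, since the rounds split into `N₀` covered and `N₁`
miscovered ones with `N₀ + N₁ = T`, the last term `(α/T) N₁ Δ = (N₁(1 - α) - α N₀)/T` equals
`N₁/T - α`, the left-hand side.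
-/

open Finset

noncomputable def coverageLoss (α x b : ℝ) : ℝ :=
  x + (if x = 0 then α + α * (1 - α) else -(α * (1 - α))) + b

theorem coverageLoss_sub_coverageLoss_zero {α x : ℝ} (hx : x = 0 ∨ x = 1) (b b₀ : ℝ) :
    coverageLoss α x b - coverageLoss α 0 b₀ = (1 - α) * (1 - 2 * α) * x + (b - b₀) := by
  rcases hx with rfl | rfl <;> norm_num [coverageLoss]; ring

theorem sub_le_coverageLoss_sub_coverageLoss_zero {α x : ℝ} (hα : α ≤ 1 / 2)
    (hx : x = 0 ∨ x = 1) (b b₀ : ℝ) :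
    b - b₀ ≤ coverageLoss α x b - coverageLoss α 0 b₀ := by
  rw [coverageLoss_sub_coverageLoss_zero hx]
  have hx₀ : 0 ≤ x := by rcases hx with rfl | rfl <;> norm_num
  have : 0 ≤ (1 - α) * (1 - 2 * α) * x := by
    apply mul_nonneg (mul_nonneg _ _) hx₀ <;> linarith
  linarith

section ZeroOne

variable {ι : Type*} {s : Finset ι} {x : ι → ℝ}

theorem sum_eq_sum_ite_eq_one (hx : ∀ i ∈ s, x i = 0 ∨ x i = 1) :
    ∑ i ∈ s, x i = ∑ i ∈ s, if x i = 1 then (1 : ℝ) else 0 :=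
  sum_congr rfl fun i hi => by rcases hx i hi with h | h <;> simp [h]

theorem sum_ite_eq_zero_add_sum_ite_eq_one (hx : ∀ i ∈ s, x i = 0 ∨ x i = 1) :
    (∑ i ∈ s, if x i = 0 then (1 : ℝ) else 0) + (∑ i ∈ s, if x i = 1 then (1 : ℝ) else 0)
      = #s := by
  rw [← sum_add_distrib, ← nsmul_one, ← sum_const]
  exact sum_congr rfl fun i hi => by rcases hx i hi with h | h <;> norm_num [h]

end ZeroOne

theorem div_mul_mul_balance_eq {α T N₀ N₁ : ℝ} (hα : α ≠ 0) (hT : T ≠ 0) (hN₁ : N₁ ≠ 0)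
    (hN : N₀ + N₁ = T) :
    α / T * (N₁ * ((1 - α) / α - N₀ / N₁)) = 1 / T * N₁ - α := by
  subst hN
  field_simp
  ring

theorem regret_to_coverage_general (T : ℕ) (hT : 0 < T)
    (S : Finset ℝ) (h0 : (0:ℝ) ∈ S)
    (α : ℝ) (hα0 : 0 < α) (hα1 : α < 0.5)
    (m : ℕ → ℝ → ℝ) (hm01 : ∀ t π, m t π = 0 ∨ m t π = 1)
    (hm0 : ∀ t, m t 0 = 0)
    (a : ℕ → ℝ → ℝ) (a0 : ℝ) (ha0 : ∀ t, a t 0 = a0)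
    (ℓ : ℕ → ℝ → ℝ)
    (hℓ : ∀ t π, ℓ t π = m t π
        + (if m t π = 0 then α + α * (1 - α) else -(α * (1 - α))) + a t π)
    (play : ℕ → ℝ)
    (N1 : ℝ)
    (hN1 : N1 = ∑ t ∈ Finset.range T, (if m t (play t) = 1 then (1:ℝ) else 0))
    (hN1pos : 0 < N1)
    (Reg C1 Δ : ℝ)
    (hReg : Reg = ∑ t ∈ Finset.range T, ℓ t (play t)
        - S.inf' ⟨0, h0⟩ (fun π => ∑ t ∈ Finset.range T, ℓ t π))
    (hC1 : C1 = ((T : ℝ) * a0 - ∑ t ∈ Finset.range T, a t (play t)) / T)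
    (hΔ : Δ = (1 - α) / α
        - (∑ t ∈ Finset.range T, (if m t (play t) = 0 then (1:ℝ) else 0)) / N1) :
    (1 / (T:ℝ)) * (∑ t ∈ Finset.range T, m t (play t)) - α
      ≤ (1 / (T:ℝ)) * Reg + C1 + (α / (T:ℝ)) * (N1 * Δ) := by
  have hT' : (0 : ℝ) < T := by exact_mod_cast hT
  have hm : ∀ t ∈ range T, m t (play t) = 0 ∨ m t (play t) = 1 := fun t _ => hm01 t _
  have hgap : α / T * (N1 * Δ) = 1 / T * ∑ t ∈ range T, m t (play t) - α := by
    rw [hΔ, sum_eq_sum_ite_eq_one hm, ← hN1]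
    refine div_mul_mul_balance_eq hα0.ne' hT'.ne' hN1pos.ne' ?_
    rw [hN1, sum_ite_eq_zero_add_sum_ite_eq_one hm, card_range]
  have hregret : ∑ t ∈ range T, (a t (play t) - a0) ≤ Reg := by
    calc ∑ t ∈ range T, (a t (play t) - a0)
        ≤ ∑ t ∈ range T, (ℓ t (play t) - ℓ t 0) := by
          refine sum_le_sum fun t _ => ?_
          rw [hℓ, hℓ, hm0, ← ha0 t]
          exact sub_le_coverageLoss_sub_coverageLoss_zero (by norm_num at hα1; linarith)
            (hm01 t _) _ _
      _ ≤ Reg := by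
          rw [hReg, sum_sub_distrib]
          exact sub_le_sub_left (inf'_le (fun π => ∑ t ∈ range T, ℓ t π) h0) _
  rw [sum_sub_distrib, sum_const, card_range, nsmul_eq_mul] at hregret
  have hslack : 0 ≤ 1 / (T : ℝ) * Reg + C1 := by
    rw [hC1, one_div_mul_eq_div, ← add_div]
    exact div_nonneg (by linarith) hT'.le
  linarith

theorem regret_to_coverage (T : ℕ) (hT : 0 < T)
    (S : Finset ℝ) (h0 : (0:ℝ) ∈ S)
    (α : ℝ) (hα0 : 0 < α) (hα1 : α < 0.5)
    (m : ℕ → ℝ → ℝ) (hm01 : ∀ t π, m t π = 0 ∨ m t π = 1)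
    (hm0 : ∀ t, m t 0 = 0)
    (a : ℕ → ℝ → ℝ) (a0 : ℝ) (ha0 : ∀ t, a t 0 = a0)
    (ℓ : ℕ → ℝ → ℝ)
    (hℓ : ∀ t π, ℓ t π = m t π
        + (if m t π = 0 then α + α * (1 - α) else -(α * (1 - α))) + a t π)
    (play : ℕ → ℝ) (hplay : ∀ t, play t ∈ S)
    (N1 : ℝ)
    (hN1 : N1 = ∑ t ∈ Finset.range T, (if m t (play t) = 1 then (1:ℝ) else 0))
    (hN1pos : 0 < N1)
    (Reg C1 Δ : ℝ)
    (hReg : Reg = ∑ t ∈ Finset.range T, ℓ t (play t)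
        - S.inf' ⟨0, h0⟩ (fun π => ∑ t ∈ Finset.range T, ℓ t π))
    (hC1 : C1 = ((T : ℝ) * a0 - ∑ t ∈ Finset.range T, a t (play t)) / T)
    (hΔ : Δ = (1 - α) / α
        - (∑ t ∈ Finset.range T, (if m t (play t) = 0 then (1:ℝ) else 0)) / N1) :
    (1 / (T:ℝ)) * (∑ t ∈ Finset.range T, m t (play t)) - α
      ≤ (1 / (T:ℝ)) * Reg + C1 + (α / (T:ℝ)) * (N1 * Δ) :=
  regret_to_coverage_general T hT S h0 α hα0 hα1 m hm01 hm0 a a0 ha0 ℓ hℓ play N1 hN1 hN1pos Reg C1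
    Δ hReg hC1 hΔ
end

section
/- Martingale-exponential bound for the EXP3.P estimator: let (p_t)_{t=1}^T be full-support probability vectors on a finite set Π, π_t ∼ p_t (conditionally on the past), g_t : Π → [0,1] arbitrary (possibly adapted), β ∈ (0,1], and g̃_t(π) = (g_t(π) 1{π_t=π} + β)/p_t(π). Then for each fixed π ∈ Π, E[ exp( Σ_{t=1}^T ( β g_t(π) − β g_t(π)1{π_t=π}/p_t(π) − β²/p_t(π) ) ) ] ≤ 1. -/
/-- The history (prefix of length `t`) of a path `ω` of arm choices. -/
def res {ι : Type*} {T : ℕ} (ω : Fin T → ι) (t : Fin T) : Fin (t : ℕ) → ι :=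
  fun i => ω ⟨i, i.isLt.trans t.isLt⟩

/-!
Write the summand as a product over rounds of the weights `p_t(i) · exp (X_t(i) − β² / p_t(π))`
with `X_t(i) = c − c · 1{i = π} / p_t(π)` and `c = β g_t(π) ∈ [0, 1]`. Given the history, `X_t ≤ 1`
has mean zero and second moment `c² / p_t(π) − c² ≤ β² / p_t(π)`, so `exp x ≤ 1 + x + x²` and
`1 + v ≤ exp v` make the weights of each round sum to at most one. Summing the rounds out one at a
time (the tower property) bounds the whole sum by one.
-/

open Finset

lemma Real.exp_le_one_add_add_sq {x : ℝ} (hx : x ≤ 1) : Real.exp x ≤ 1 + x + x ^ 2 := by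
  rcases le_or_gt (-1) x with hx' | hx'
  · have := (abs_le.mp (Real.abs_exp_sub_one_sub_id_le (abs_le.mpr ⟨hx', hx⟩))).2
    linarith
  · nlinarith [Real.exp_le_one_iff.mpr (by linarith : x ≤ 0)]

section ExpMoment

variable {ι : Type*} [Fintype ι] {q X : ι → ℝ}

lemma sum_mul_exp_sub_le_one (hq0 : ∀ i, 0 ≤ q i) (hq1 : ∑ i, q i = 1) (hX : ∀ i, X i ≤ 1)
    (hmean : ∑ i, q i * X i = 0) {v : ℝ} (hvar : ∑ i, q i * X i ^ 2 ≤ v) :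
    ∑ i, q i * Real.exp (X i - v) ≤ 1 := by
  have hmgf : ∑ i, q i * Real.exp (X i) ≤ 1 + v :=
    calc ∑ i, q i * Real.exp (X i) ≤ ∑ i, q i * (1 + X i + X i ^ 2) := by
          gcongr with i
          · exact hq0 i
          · exact Real.exp_le_one_add_add_sq (hX i)
      _ = ∑ i, q i + ∑ i, q i * X i + ∑ i, q i * X i ^ 2 := by
          simp only [mul_add, mul_one, sum_add_distrib]
      _ ≤ 1 + v := by rw [hq1, hmean]; linarith
  calc ∑ i, q i * Real.exp (X i - v) = (∑ i, q i * Real.exp (X i)) * Real.exp (-v) := by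
        simp only [sub_eq_add_neg, Real.exp_add, sum_mul, mul_assoc]
    _ ≤ Real.exp v * Real.exp (-v) := by
        gcongr
        linarith [Real.add_one_le_exp v]
    _ = 1 := by rw [← Real.exp_add, add_neg_cancel, Real.exp_zero]

end ExpMoment

section ImportanceWeighting

variable {ι : Type*} [Fintype ι] [DecidableEq ι] {q : ι → ℝ} {π : ι}

lemma sum_mul_sub_importance_weighted (hq1 : ∑ i, q i = 1) (hπ : q π ≠ 0) (c : ℝ) :
    ∑ i, q i * (c - c * (if i = π then 1 else 0) / q π) = 0 := by
  have h : ∀ i, q i * (c - c * (if i = π then 1 else 0) / q π) =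
      q i * c - if i = π then c else 0 := by
    intro i
    rcases eq_or_ne i π with rfl | hi
    · simp only [if_true]; field_simp
    · simp [hi]
  simp only [h, sum_sub_distrib, ← sum_mul, hq1, sum_ite_eq', mem_univ, if_true, one_mul, sub_self]

lemma sum_mul_sub_importance_weighted_sq (hq1 : ∑ i, q i = 1) (hπ : q π ≠ 0) (c : ℝ) :
    ∑ i, q i * (c - c * (if i = π then 1 else 0) / q π) ^ 2 = c ^ 2 / q π - c ^ 2 := by
  have h : ∀ i, q i * (c - c * (if i = π then 1 else 0) / q π) ^ 2 =
      q i * c ^ 2 + if i = π then c ^ 2 / q π - 2 * c ^ 2 else 0 := by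
    intro i
    rcases eq_or_ne i π with rfl | hi
    · simp only [if_true]; field_simp; ring
    · simp [hi]
  simp only [h, sum_add_distrib, ← sum_mul, hq1, sum_ite_eq', mem_univ, if_true, one_mul]
  ring

lemma sum_mul_exp_importance_weighted_le_one (hq0 : ∀ i, 0 ≤ q i) (hq1 : ∑ i, q i = 1)
    (hπ : 0 < q π) {c β : ℝ} (hc0 : 0 ≤ c) (hcβ : c ≤ β) (hβ1 : β ≤ 1) :
    ∑ i, q i * Real.exp (c - c * (if i = π then 1 else 0) / q π - β ^ 2 / q π) ≤ 1 := by
  refine sum_mul_exp_sub_le_one hq0 hq1 (fun i => ?_)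
    (sum_mul_sub_importance_weighted hq1 hπ.ne' c) ?_
  · have : 0 ≤ c * (if i = π then 1 else 0) / q π := by positivity
    linarith
  · rw [sum_mul_sub_importance_weighted_sq hq1 hπ.ne']
    have : c ^ 2 / q π ≤ β ^ 2 / q π := by gcongr
    nlinarith

end ImportanceWeighting

section Tower

variable {ι : Type*}

lemma res_zero {T : ℕ} (ω : Fin (T + 1) → ι) : res ω 0 = Fin.elim0 := by
  funext j
  exact j.elim0

lemma res_cons_succ {T : ℕ} (i : ι) (ω : Fin T → ι) (t : Fin T) :
    res (Fin.cons i ω : Fin (T + 1) → ι) t.succ = Fin.cons i (res ω t) := by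
  funext j
  refine Fin.cases rfl (fun k => ?_) j
  simp only [Fin.cons_succ]
  exact Fin.cons_succ (α := fun _ => ι) i ω ⟨k, k.isLt.trans t.isLt⟩

variable [Fintype ι]

theorem sum_prod_res_le_one {T : ℕ} (F : (t : Fin T) → (Fin t → ι) → ι → ℝ)
    (hF0 : ∀ t h i, 0 ≤ F t h i) (hF1 : ∀ t h, ∑ i, F t h i ≤ 1) :
    ∑ ω : Fin T → ι, ∏ t, F t (res ω t) (ω t) ≤ 1 := by
  induction T with
  | zero => simp
  | succ T ih =>
    have hsplit : ∀ i (ω : Fin T → ι),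
        ∏ t, F t (res (Fin.cons i ω : Fin (T + 1) → ι) t) ((Fin.cons i ω : Fin (T + 1) → ι) t) =
          F 0 Fin.elim0 i * ∏ t, F t.succ (Fin.cons i (res ω t)) (ω t) := by
      intro i ω
      simp only [Fin.prod_univ_succ, res_zero, res_cons_succ, Fin.cons_zero, Fin.cons_succ]
    calc ∑ ω : Fin (T + 1) → ι, ∏ t, F t (res ω t) (ω t)
        = ∑ i, F 0 Fin.elim0 i * ∑ ω : Fin T → ι, ∏ t, F t.succ (Fin.cons i (res ω t)) (ω t) := by
          rw [← Equiv.sum_comp (Fin.consEquiv fun _ => ι), Fintype.sum_prod_type]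
          simp only [mul_sum]
          exact sum_congr rfl fun i _ => sum_congr rfl fun ω _ => hsplit i ω
      _ ≤ ∑ i, F 0 Fin.elim0 i * 1 := by
          gcongr with i
          · exact hF0 _ _ _
          · exact ih (fun t h => F t.succ (Fin.cons i h)) (fun _ _ _ => hF0 _ _ _)
              (fun _ _ => hF1 _ _)
      _ ≤ 1 := by simpa using hF1 0 Fin.elim0

end Tower

theorem exp3p_supermartingale_bound {ι : Type*} [Fintype ι] [DecidableEq ι] (T : ℕ)
    (p : (t : Fin T) → (Fin (t : ℕ) → ι) → ι → ℝ)
    (hp_pos : ∀ t h i, 0 < p t h i)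
    (hp_sum : ∀ t h, ∑ i, p t h i = 1)
    (g : (t : Fin T) → (Fin (t : ℕ) → ι) → ι → ℝ)
    (hg : ∀ t h i, g t h i ∈ Set.Icc (0:ℝ) 1)
    (β : ℝ) (hβ0 : 0 < β) (hβ1 : β ≤ 1) (π : ι) :
    ∑ ω : Fin T → ι,
      (∏ t, p t (res ω t) (ω t)) *
        Real.exp (∑ t,
          (β * g t (res ω t) π
            - β * g t (res ω t) π * (if ω t = π then 1 else 0) / p t (res ω t) π
            - β^2 / p t (res ω t) π)) ≤ 1 := by
  simp only [Real.exp_sum, ← prod_mul_distrib]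
  refine sum_prod_res_le_one (fun t h i => p t h i * Real.exp (β * g t h π
      - β * g t h π * (if i = π then 1 else 0) / p t h π - β ^ 2 / p t h π))
    (fun t h i => (mul_pos (hp_pos t h i) (Real.exp_pos _)).le) (fun t h => ?_)
  obtain ⟨hg0, hg1⟩ := hg t h π
  exact sum_mul_exp_importance_weighted_le_one (fun i => (hp_pos t h i).le) (hp_sum t h)
    (hp_pos t h π) (mul_nonneg hβ0.le hg0) (mul_le_of_le_one_right hβ0.le hg1) hβ1
end

section
/- Bounded expectation of the full-unlocking estimator: let Π ⊆ [0,1] be finite, p a full-support probability vector on Π, Π* ⊆ Π nonempty, g : Π → [0,1] with g(π) ≤ g* + ε for all π ∈ Π* and g(π) ≤ ε·g* for all π ∉ Π* (for some g* ∈ [0,1], ε ≥ 0), and β > 0. Define g̃(π) = 1{π∈Π*}·( (g(π)+β)/Σ_{π'∈Π*} p(π') + β ) + 1{π∉Π*}·( g(π) + β/Σ_{π'≤π} p(π') ). Then Σ_{π∈Π} p(π) g̃(π) ≤ (1+ε) g* + ε + (2 + (Σ_{π∉Π*} p(π))/(Σ_{π∈Π*} p(π)))·β. -/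
/-!
Split the expectation into covered and miscovered thresholds. On a covered threshold the estimate
is at most `(g* + ε + β) / q + β`, where `q = Σ_{π ∈ Π*} p(π)`. A miscovered threshold lies above
every covered one, so its prefix mass `Σ_{π' ≤ π} p(π')` is at least `q`, and its estimate is at
most `ε g* + β / q`. Weighting by `q` and by `r = 1 - q` gives the bound, using `q, r ≤ 1`.
-/

open Finset

theorem Finset.sum_mul_le_sum_mul_of_le {ι R : Type*} [CommSemiring R] [PartialOrder R]
    [IsOrderedRing R] {s : Finset ι} {p f : ι → R} {c : R}
    (hp : ∀ i ∈ s, 0 ≤ p i) (hf : ∀ i ∈ s, f i ≤ c) :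
    ∑ i ∈ s, p i * f i ≤ (∑ i ∈ s, p i) * c := by
  rw [sum_mul]
  exact sum_le_sum fun i hi => mul_le_mul_of_nonneg_left (hf i hi) (hp i hi)

theorem Finset.sum_le_sum_filter_le_of_forall_le {α M : Type*} [LinearOrder α]
    [AddCommMonoid M] [PartialOrder M] [IsOrderedAddMonoid M] {s t : Finset α} {p : α → M}
    {a : α} (hp : ∀ i ∈ s, 0 ≤ p i) (hts : t ⊆ s) (hta : ∀ i ∈ t, i ≤ a) :
    ∑ i ∈ t, p i ≤ ∑ i ∈ s.filter (· ≤ a), p i :=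
  sum_le_sum_of_subset_of_nonneg (fun i hi => mem_filter.2 ⟨hts hi, hta i hi⟩)
    fun i hi _ => hp i (mem_filter.1 hi).1

theorem weighted_unlock_bound_le {q r gs ε β : ℝ} (hq : 0 < q) (hr : 0 ≤ r) (hrq : r + q = 1)
    (hgs : 0 ≤ gs) (hε : 0 ≤ ε) (hβ : 0 ≤ β) :
    r * (ε * gs + β / q) + q * ((gs + ε + β) / q + β)
      ≤ (1 + ε) * gs + ε + (2 + r / q) * β := by
  have hcovered : q * ((gs + ε + β) / q + β) = gs + ε + β + q * β := by field_simp
  have hmiscovered : r * (ε * gs + β / q) = r * (ε * gs) + r / q * β := by ring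
  rw [hcovered, hmiscovered]
  nlinarith [mul_nonneg hε hgs, mul_nonneg hq.le hβ]

open Classical in
theorem unlock_plus_estimator_expectation_bound_general
    (S : Finset ℝ)
    (p : ℝ → ℝ) (hp : ∀ π ∈ S, 0 < p π) (hsum : ∑ π ∈ S, p π = 1)
    (Pstar : Finset ℝ) (hsub : Pstar ⊆ S) (hne : Pstar.Nonempty)
    (hdown : ∀ π₁ ∈ Pstar, ∀ π₂ ∈ S, π₂ ∉ Pstar → π₁ ≤ π₂)
    (g : ℝ → ℝ)
    (gs ε : ℝ) (hgs : gs ∈ Set.Icc (0:ℝ) 1) (hε : 0 ≤ ε)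
    (hgin : ∀ π ∈ Pstar, g π ≤ gs + ε)
    (hgout : ∀ π ∈ S, π ∉ Pstar → g π ≤ ε * gs)
    (β : ℝ) (hβ : 0 < β)
    (gt : ℝ → ℝ)
    (hgt : ∀ π ∈ S, gt π = if π ∈ Pstar
        then (g π + β) / (∑ π' ∈ Pstar, p π') + β
        else g π + β / (∑ π' ∈ S.filter (fun π' => π' ≤ π), p π')) :
    ∑ π ∈ S, p π * gt π
      ≤ (1 + ε) * gs + ε
        + (2 + (∑ π ∈ S.filter (fun π' => π' ∉ Pstar), p π) / (∑ π ∈ Pstar, p π)) * β := by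
  set q := ∑ π ∈ Pstar, p π
  set r := ∑ π ∈ S.filter (fun π' => π' ∉ Pstar), p π
  have hp₀ : ∀ π ∈ S, 0 ≤ p π := fun π hπ => (hp π hπ).le
  have hq : 0 < q := sum_pos (fun π hπ => hp π (hsub hπ)) hne
  have hsplit (f : ℝ → ℝ) : ∑ π ∈ S, f π = ∑ π ∈ S.filter (· ∉ Pstar), f π + ∑ π ∈ Pstar, f π := by
    rw [← sdiff_eq_filter, sum_sdiff hsub]
  have hin : ∀ π ∈ Pstar, gt π ≤ (gs + ε + β) / q + β := fun π hπ => by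
    rw [hgt π (hsub hπ), if_pos hπ]
    gcongr
    exact hgin π hπ
  have hout : ∀ π ∈ S.filter (· ∉ Pstar), gt π ≤ ε * gs + β / q := fun π hπ => by
    obtain ⟨hπS, hπ⟩ := mem_filter.1 hπ
    rw [hgt π hπS, if_neg hπ]
    gcongr
    · exact hgout π hπS hπ
    · exact sum_le_sum_filter_le_of_forall_le hp₀ hsub fun π₁ h₁ => hdown π₁ h₁ π hπS hπ
  calc ∑ π ∈ S, p π * gt π
      = ∑ π ∈ S.filter (· ∉ Pstar), p π * gt π + ∑ π ∈ Pstar, p π * gt π := hsplit _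
    _ ≤ r * (ε * gs + β / q) + q * ((gs + ε + β) / q + β) :=
        add_le_add (sum_mul_le_sum_mul_of_le (fun π hπ => hp₀ π (mem_filter.1 hπ).1) hout)
          (sum_mul_le_sum_mul_of_le (fun π hπ => hp₀ π (hsub hπ)) hin)
    _ ≤ (1 + ε) * gs + ε + (2 + r / q) * β :=
        weighted_unlock_bound_le hq (sum_nonneg fun π hπ => hp₀ π (mem_filter.1 hπ).1)
          (by rw [← hsplit, hsum]) hgs.1 hε hβ.le

open Classical in
theorem unlock_plus_estimator_expectation_bound
    (S : Finset ℝ) (hS : ∀ π ∈ S, π ∈ Set.Icc (0:ℝ) 1)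
    (p : ℝ → ℝ) (hp : ∀ π ∈ S, 0 < p π) (hsum : ∑ π ∈ S, p π = 1)
    (Pstar : Finset ℝ) (hsub : Pstar ⊆ S) (hne : Pstar.Nonempty)
    (hdown : ∀ π₁ ∈ Pstar, ∀ π₂ ∈ S, π₂ ∉ Pstar → π₁ ≤ π₂)
    (g : ℝ → ℝ) (hg : ∀ π ∈ S, g π ∈ Set.Icc (0:ℝ) 1)
    (gs ε : ℝ) (hgs : gs ∈ Set.Icc (0:ℝ) 1) (hε : 0 ≤ ε)
    (hgin : ∀ π ∈ Pstar, g π ≤ gs + ε)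
    (hgout : ∀ π ∈ S, π ∉ Pstar → g π ≤ ε * gs)
    (β : ℝ) (hβ : 0 < β)
    (gt : ℝ → ℝ)
    (hgt : ∀ π ∈ S, gt π = if π ∈ Pstar
        then (g π + β) / (∑ π' ∈ Pstar, p π') + β
        else g π + β / (∑ π' ∈ S.filter (fun π' => π' ≤ π), p π')) :
    ∑ π ∈ S, p π * gt π
      ≤ (1 + ε) * gs + ε
        + (2 + (∑ π ∈ S.filter (fun π' => π' ∉ Pstar), p π) / (∑ π ∈ Pstar, p π)) * β :=
  unlock_plus_estimator_expectation_bound_general S p hp hsum Pstar hsub hne hdown g gs ε hgs hε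
    hgin hgout β hβ gt hgt
end
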